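/- Non-realizability: if A is an almost ι-complex whose associated standard complex has initial parameters (a_1, b_2) = (−1, −i) with i > 0 (or dually (+1, i)), then A is not locally equivalent (as an almost ι-complex) to any genuine ι-complex, i.e., one in which ι is an honest chain map with ι² chain homotopic to the identity. In particular the forgetful homomorphism from ι-complexes modulo local equivalence to almost ι-complexes modulo local equivalence is not surjective. -/

import Mathlib

open Polynomial

abbrev F2 : Type := ZMod 2
abbrev R : Type := Polynomial F2

noncomputable section

namespace AI

/-- The variable `U`. -/
def Uu : R := Polynomial.X

/-- The free `R`-module of rank `n`. -/
abbrev V (n : ℕ) : Type := Fin n → R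

/-- The `i`-th standard basis vector. -/
def e {n : ℕ} (i : Fin n) : V n := fun j => if j = i then 1 else 0

/-- The `i`-th standard basis vector over `F2`. -/
def e2 {n : ℕ} (i : Fin n) : Fin n → F2 := fun j => if j = i then 1 else 0

/-- `x` lies in the image of multiplication by `U`. -/
def modU {n : ℕ} (x : V n) : Prop := ∀ j, (x j).coeff 0 = 0

/-- `x` is homogeneous of degree `c` with respect to the generator gradings `gr`
(where `deg U = -2`). -/
def IsHomog {n : ℕ} (gr : Fin n → ℤ) (c : ℤ) (x : V n) : Prop :=
  ∀ (j : Fin n) (m : ℕ), (x j).coeff m ≠ 0 → gr j - 2 * (m : ℤ) = c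

/-- `f` is a graded `R`-linear map of degree `dg`. -/
def GradedMap {m n : ℕ} (gr₁ : Fin m → ℤ) (gr₂ : Fin n → ℤ) (dg : ℤ)
    (f : V m →ₗ[R] V n) : Prop :=
  ∀ i : Fin m, IsHomog gr₂ (gr₁ i + dg) (f (e i))

/-- The raw data of a free finitely generated `ℤ`-graded complex over `R = F[U]`. -/
structure PreCplx where
  n : ℕ
  gr : Fin n → ℤ
  d : V n →ₗ[R] V n

def IsCycle (C : PreCplx) (x : V C.n) : Prop := C.d x = 0

def IsBdry (C : PreCplx) (x : V C.n) : Prop := ∃ y, C.d y = x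

/-- `x` is a cycle representing a `U`-nontorsion homology class. -/
def NontorsionClass (C : PreCplx) (x : V C.n) : Prop :=
  IsCycle C x ∧ ∀ k : ℕ, ¬ IsBdry C ((Uu ^ k) • x)

/-- `U⁻¹H_*(C) ≅ F[U, U⁻¹]`, generated by a degree-zero cycle (normalization
convention: the maximal degree of a `U`-nontorsion cycle class is zero, so the
localized homology is supported in even degrees). -/
def HtowerCond (C : PreCplx) : Prop :=
  ∃ x : V C.n, IsCycle C x ∧ IsHomog C.gr 0 x ∧
    (∀ k : ℕ, ¬ IsBdry C ((Uu ^ k) • x)) ∧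
    (∀ y : V C.n, IsCycle C y →
      ∃ (k : ℕ) (p : R) (z : V C.n), (Uu ^ k) • y = p • x + C.d z)

/-- `C` is a genuine graded chain complex. -/
def IsCplx (C : PreCplx) : Prop :=
  GradedMap C.gr C.gr (-1) C.d ∧ C.d ∘ₗ C.d = 0

/-- `f` and `g` are homotopic mod `U`. -/
def HomotopicModU (C₁ C₂ : PreCplx) (f g : V C₁.n →ₗ[R] V C₂.n) : Prop :=
  ∃ H : V C₁.n →ₗ[R] V C₂.n, GradedMap C₁.gr C₂.gr 1 H ∧
    ∀ x, modU ((f + g + H ∘ₗ C₁.d + C₂.d ∘ₗ H) x)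

/-- The raw data of an almost ι-complex. -/
structure PreAI extends PreCplx where
  ι : V n →ₗ[R] V n

/-- `ω = 1 + ι`. -/
def omega (C : PreAI) : V C.n →ₗ[R] V C.n := LinearMap.id + C.ι

/-- `C` is an almost ι-complex. -/
def IsAICplx (C : PreAI) : Prop :=
  IsCplx C.toPreCplx ∧
  GradedMap C.gr C.gr 0 C.ι ∧
  (∀ x, modU ((C.ι ∘ₗ C.d + C.d ∘ₗ C.ι) x)) ∧
  HomotopicModU C.toPreCplx C.toPreCplx (C.ι ∘ₗ C.ι) LinearMap.id ∧
  HtowerCond C.toPreCplx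

/-- `C` is a genuine ι-complex: `ι` is an honest chain map whose square is
genuinely chain homotopic to the identity. -/
def IsIotaCplx (C : PreAI) : Prop :=
  IsCplx C.toPreCplx ∧
  GradedMap C.gr C.gr 0 C.ι ∧
  C.ι ∘ₗ C.d = C.d ∘ₗ C.ι ∧
  (∃ H : V C.n →ₗ[R] V C.n, GradedMap C.gr C.gr 1 H ∧
    C.ι ∘ₗ C.ι + LinearMap.id = H ∘ₗ C.d + C.d ∘ₗ H) ∧
  HtowerCond C.toPreCplx

/-- A reduced complex: the differential vanishes mod `U`. -/
def Reduced (C : PreAI) : Prop := ∀ x, modU (C.d x)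

/-- `f` is an almost ι-morphism. -/
def isAIMorphism (C₁ C₂ : PreAI) (f : V C₁.n →ₗ[R] V C₂.n) : Prop :=
  GradedMap C₁.gr C₂.gr 0 f ∧
  f ∘ₗ C₁.d = C₂.d ∘ₗ f ∧
  HomotopicModU C₁.toPreCplx C₂.toPreCplx (f ∘ₗ C₁.ι) (C₂.ι ∘ₗ f)

/-- A local map: an almost ι-morphism inducing an isomorphism on `U`-localized
homology (equivalently, with the normalization conventions in force, preserving
`U`-nontorsion cycle classes). -/
def isLocalMap (C₁ C₂ : PreAI) (f : V C₁.n →ₗ[R] V C₂.n) : Prop :=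
  isAIMorphism C₁ C₂ f ∧
  ∀ x, NontorsionClass C₁.toPreCplx x → NontorsionClass C₂.toPreCplx (f x)

/-- Local equivalence of almost ι-complexes. -/
def LocallyEquiv (C₁ C₂ : PreAI) : Prop :=
  (∃ f, isLocalMap C₁ C₂ f) ∧ (∃ g, isLocalMap C₂ C₁ g)

/-- The tensor product (over `R`) of linear maps between free modules,
in the bases indexed by `finProdFinEquiv`. -/
def tmap {m n m' n' : ℕ} (f : V m →ₗ[R] V m') (g : V n →ₗ[R] V n') :
    V (m * n) →ₗ[R] V (m' * n') where
  toFun x := fun p => ∑ q : Fin (m * n),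
    x q * f (e (finProdFinEquiv.symm q).1) (finProdFinEquiv.symm p).1
        * g (e (finProdFinEquiv.symm q).2) (finProdFinEquiv.symm p).2
  map_add' x y := by
    funext p
    simp [Pi.add_apply, add_mul, Finset.sum_add_distrib]
  map_smul' c x := by
    funext p
    simp only [RingHom.id_apply, Pi.smul_apply, smul_eq_mul, Finset.mul_sum]
    exact Finset.sum_congr rfl fun q _ => by ring

/-- The tensor product of complexes. -/
def tensorPre (C₁ C₂ : PreCplx) : PreCplx where
  n := C₁.n * C₂.n
  gr := fun q => C₁.gr (finProdFinEquiv.symm q).1 + C₂.gr (finProdFinEquiv.symm q).2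
  d := tmap C₁.d LinearMap.id + tmap LinearMap.id C₂.d

/-- The tensor product of almost ι-complexes. -/
def tensorAI (C₁ C₂ : PreAI) : PreAI where
  toPreCplx := tensorPre C₁.toPreCplx C₂.toPreCplx
  ι := tmap C₁.ι C₂.ι

/-- The transpose of a square matrix map (the dual map in the dual basis). -/
def tr {n : ℕ} (f : V n →ₗ[R] V n) : V n →ₗ[R] V n where
  toFun x := fun j => ∑ i : Fin n, x i * f (e j) i
  map_add' x y := by
    funext j
    simp [Pi.add_apply, add_mul, Finset.sum_add_distrib]
  map_smul' c x := by
    funext j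
    simp only [RingHom.id_apply, Pi.smul_apply, smul_eq_mul, Finset.mul_sum]
    exact Finset.sum_congr rfl fun i _ => by ring

/-- The dual complex. -/
def dualPre (C : PreCplx) : PreCplx where
  n := C.n
  gr := fun i => -C.gr i
  d := tr C.d

/-- The dual almost ι-complex. -/
def dualAI (C : PreAI) : PreAI where
  toPreCplx := dualPre C.toPreCplx
  ι := tr C.ι

/-- The trivial complex `C(0) = (F[U], ∂ = 0, ι = id)`. -/
def cZero : PreAI := ⟨⟨1, fun _ => 0, 0⟩, LinearMap.id⟩

/-- The contraction map `C ⊗ C^∨ → F[U]`, `x ⊗ y ↦ y(x)`. -/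
def contr (n : ℕ) : V (n * n) →ₗ[R] V 1 where
  toFun x := fun _ => ∑ i : Fin n, x (finProdFinEquiv (i, i))
  map_add' x y := by funext j; simp [Pi.add_apply, Finset.sum_add_distrib]
  map_smul' c x := by
    funext j
    simp only [RingHom.id_apply, Pi.smul_apply, smul_eq_mul, Finset.mul_sum]

/-! ### Standard and augmented complexes -/

/-- The `i`-th symbol (0-indexed) of the parameter sequence, padded by zeros. -/
def seqAt (M : List ℤ) (i : ℕ) : ℤ := M.getD i 0

/-- Grading step of a `b`-arrow. -/
def bstep (b : ℤ) : ℤ := (if 0 < b then 1 else -1) - 2 * b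

/-- Grading of the generator `T_i` of the standard/augmented complex. -/
def stdGr (M : List ℤ) (i : ℕ) : ℤ :=
  ∑ s ∈ Finset.range i, if s % 2 = 1 then bstep (seqAt M s) else 0

/-- A linear endomorphism of `V n` given by a matrix of coefficients. -/
def ofMatrix {n : ℕ} (c : ℕ → ℕ → R) : V n →ₗ[R] V n where
  toFun x := fun j => ∑ i : Fin n, x i * c i j
  map_add' x y := by
    funext j
    simp [Pi.add_apply, add_mul, Finset.sum_add_distrib]
  map_smul' r x := by
    funext j
    simp only [RingHom.id_apply, Pi.smul_apply, smul_eq_mul, Finset.mul_sum]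
    exact Finset.sum_congr rfl fun i _ => by ring

/-- Matrix of the differential of the standard/augmented complex: the `b`-symbol
at (0-indexed) odd position `s` of `M` relates `T_s` and `T_{s+1}`. -/
def dCoef (M : List ℤ) (i j : ℕ) : R :=
  if i % 2 = 1 ∧ seqAt M i < 0 ∧ j = i + 1 then Uu ^ (seqAt M i).natAbs
  else if i % 2 = 0 ∧ 0 < i ∧ 0 < seqAt M (i - 1) ∧ j + 1 = i then
    Uu ^ (seqAt M (i - 1)).natAbs
  else 0

/-- Matrix of `ω = 1 + ι` on the standard/augmented complex: the `a`-symbol at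
(0-indexed) even position `s` of `M` relates `T_s` and `T_{s+1}`. -/
def wCoef (M : List ℤ) (i j : ℕ) : R :=
  if i % 2 = 0 ∧ seqAt M i = -1 ∧ j = i + 1 then 1
  else if i % 2 = 1 ∧ seqAt M (i - 1) = 1 ∧ j + 1 = i then 1
  else 0

/-- Matrix of `ι = 1 + ω` (char 2). -/
def iCoef (M : List ℤ) (i j : ℕ) : R :=
  (if i = j then 1 else 0) + wCoef M i j

/-- The standard (even length) or augmented (odd length) complex on generators
`T_0, …, T_{M.length}` determined by the symbol sequence `M`. -/
def symCplx (M : List ℤ) : PreAI :=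
  ⟨⟨M.length + 1, fun i => stdGr M i, ofMatrix (dCoef M)⟩, ofMatrix (iCoef M)⟩

/-- Validity of a standard parameter sequence. -/
def StdParams (M : List ℤ) : Prop :=
  M.length % 2 = 0 ∧
  ∀ i < M.length, if i % 2 = 0 then seqAt M i = 1 ∨ seqAt M i = -1 else seqAt M i ≠ 0

/-- Validity of an augmented parameter sequence. -/
def AugParams (M : List ℤ) : Prop :=
  M.length % 2 = 1 ∧
  ∀ i < M.length, if i % 2 = 0 then seqAt M i = 1 ∨ seqAt M i = -1 else seqAt M i ≠ 0

/-- The modified order `<!` on `ℤ`: `−1 <! −2 <! ⋯ <! 0 <! ⋯ <! 2 <! 1`. -/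
def ltB (x y : ℤ) : Prop :=
  (x < 0 ∧ 0 ≤ y) ∨ (x ≤ 0 ∧ 0 < y) ∨ (x < 0 ∧ y < 0 ∧ y < x) ∨ (0 < x ∧ 0 < y ∧ y < x)

def leB (x y : ℤ) : Prop := ltB x y ∨ x = y

/-- Strict lexicographic order on (zero-padded) parameter sequences. -/
def lexLt (M M' : List ℤ) : Prop :=
  ∃ k : ℕ, (∀ i < k, seqAt M i = seqAt M' i) ∧ ltB (seqAt M k) (seqAt M' k)

def lexLe (M M' : List ℤ) : Prop := lexLt M M' ∨ ∀ i, seqAt M i = seqAt M' i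

/-- A short map from the standard (even `M.length`) or augmented (odd `M.length`)
complex determined by `M` to `A`: the `ω`-condition (standard case) resp. the
`∂`-condition (augmented case) is waived on the final generator. -/
def isShortMap (M : List ℤ) (A : PreAI) (f : V (M.length + 1) →ₗ[R] V A.n) : Prop :=
  GradedMap (symCplx M).gr A.gr 0 f ∧
  (∀ i : Fin (M.length + 1), ((i : ℕ) < M.length ∨ M.length % 2 = 0) →
    A.d (f (e i)) = f ((symCplx M).d (e i))) ∧
  (∀ i : Fin (M.length + 1), ((i : ℕ) < M.length ∨ M.length % 2 = 1) →
    modU ((omega A) (f (e i)) + f ((omega (symCplx M)) (e i))))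

/-- A local short map: `T_0` goes to a `U`-nontorsion cycle class. -/
def isLocalShortMap (M : List ℤ) (A : PreAI) (f : V (M.length + 1) →ₗ[R] V A.n) : Prop :=
  isShortMap M A f ∧ NontorsionClass A.toPreCplx (f (e ⟨0, Nat.succ_pos _⟩))

/-- The sequence of invariants `s_i(A)` (1-indexed in the paper; 0-indexed here):
`s k` is the `≤!`-maximum of the `(k+1)`-st symbols among standard complexes
locally mapping to `A` whose first `k` symbols are `s 0, …, s (k-1)`. -/
def IsInvariantSeq (A : PreAI) (s : ℕ → ℤ) : Prop :=
  ∀ k : ℕ,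
    (∃ M : List ℤ, StdParams M ∧ (∃ f, isLocalMap (symCplx M) A f) ∧
      ∀ i ≤ k, seqAt M i = s i) ∧
    (∀ M : List ℤ, StdParams M → (∃ f, isLocalMap (symCplx M) A f) →
      (∀ i < k, seqAt M i = s i) → leB (seqAt M k) (s k))

/-- Reduction mod `U` of a linear map, as an `F₂`-linear map. -/
def mapHat {m n : ℕ} (f : V m →ₗ[R] V n) : (Fin m → F2) →ₗ[F2] (Fin n → F2) where
  toFun x := fun j => ∑ i : Fin m, x i * (f (e i) j).coeff 0
  map_add' x y := by
    funext j
    simp [Pi.add_apply, add_mul, Finset.sum_add_distrib]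
  map_smul' c x := by
    funext j
    simp only [RingHom.id_apply, Pi.smul_apply, smul_eq_mul, Finset.mul_sum]
    exact Finset.sum_congr rfl fun i _ => by ring

/-- The induced action `ω̂` on `C/U`. -/
def wHat (C : PreAI) : (Fin C.n → F2) →ₗ[F2] (Fin C.n → F2) := mapHat (omega C)

end AI

/-!
The differential of a standard complex `C` on generators `T₀, T₁, …` splits into the isolated
generator `T₀` and one arrow of weight `U^|b|` on each pair `{T_s, T_{s+1}}`, `s` odd; hence a
cycle of `C` without `T₀`-component is `U`-torsion in homology.

For `(a₁, b₂) = (−1, −i)` take a local map `f : X → C` from a genuine ι-complex and the tower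
generator `x` of `X`. Since `ι` commutes with `∂`, `ωx` is a cycle, so `f(ωx)` has no
`T₁`-component (`∂T₁ = U^i T₂`). Read at `T₁`, the homotopy `fω ≃ ωf` mod `U` then says that the
`T₀`-component of `f x` vanishes mod `U`, hence vanishes by degree: `f x` is torsion.

For `(a₁, b₂) = (1, i)` take local maps `g : C → X` and `f : X → C`. The homotopy gives
`ω g(T₁) + g(T₀) + ∂K(T₁) = U v`, and `∂(ω g(T₂)) = ω g(∂T₂) = U^i ω g(T₁)` shows that
`U^i g(T₀) + U^{i+1} v` is a boundary. So `v` is a nontorsion cycle of degree `2`, and `f v` is a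
nontorsion cycle of `C` of positive degree, which cannot have a `T₀`-component.
-/

namespace AI

section CharTwo

variable {N : Type*} [AddCommGroup N] [Module R N]

lemma add_self_eq_zero (x : N) : x + x = 0 := by
  rw [← two_smul R x, show (2 : R) = 0 from CharTwo.two_eq_zero, zero_smul]

lemma eq_of_add_eq_zero {x y : N} (h : x + y = 0) : x = y := by
  rw [← add_zero x, ← add_self_eq_zero y, ← add_assoc, h, zero_add]

end CharTwo

lemma Uu_pow_ne_zero (k : ℕ) : Uu ^ k ≠ 0 := pow_ne_zero k Polynomial.X_ne_zero

section ModU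

variable {n : ℕ}

lemma modU_iff_exists_eq_smul {u : V n} : modU u ↔ ∃ v : V n, u = Uu • v := by
  constructor
  · intro h
    refine ⟨fun j => (u j).divX, funext fun j => ?_⟩
    simpa [Uu, h j] using (Polynomial.X_mul_divX_add (u j)).symm
  · rintro ⟨v, rfl⟩ j
    simp [Uu]

lemma modU_add {u v : V n} (hu : modU u) (hv : modU v) : modU (u + v) := fun j => by
  simp [hu j, hv j]

lemma modU_map {m : ℕ} (f : V m →ₗ[R] V n) {u : V m} (hu : modU u) : modU (f u) := by
  obtain ⟨v, rfl⟩ := modU_iff_exists_eq_smul.1 hu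
  exact modU_iff_exists_eq_smul.2 ⟨f v, map_smul f Uu v⟩

end ModU

def uTorsion (C : PreCplx) : Submodule R (V C.n) where
  carrier := {x | ∃ k : ℕ, IsBdry C (Uu ^ k • x)}
  add_mem' := by
    rintro x y ⟨k, a, ha⟩ ⟨l, b, hb⟩
    refine ⟨k + l, Uu ^ l • a + Uu ^ k • b, ?_⟩
    rw [map_add, map_smul, map_smul, ha, hb, smul_smul, smul_smul, ← pow_add, ← pow_add,
      add_comm l k, smul_add]
  zero_mem' := ⟨0, 0, by simp⟩
  smul_mem' := by
    rintro r x ⟨k, a, ha⟩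
    exact ⟨k, r • a, by rw [map_smul, ha, smul_comm]⟩

section UTorsion

variable {C : PreCplx}

lemma nontorsionClass_iff {x : V C.n} :
    NontorsionClass C x ↔ IsCycle C x ∧ x ∉ uTorsion C := by
  simp [NontorsionClass, uTorsion]

lemma d_mem_uTorsion (y : V C.n) : C.d y ∈ uTorsion C := ⟨0, y, by simp⟩

lemma mem_uTorsion_of_Upow_smul_mem {k : ℕ} {x : V C.n} (h : Uu ^ k • x ∈ uTorsion C) :
    x ∈ uTorsion C := by
  obtain ⟨l, hl⟩ := h
  exact ⟨l + k, by rwa [pow_add, mul_smul]⟩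

end UTorsion

section Grading

variable {m n : ℕ} {gr : Fin n → ℤ}

lemma IsHomog.add {c : ℤ} {x y : V n} (hx : IsHomog gr c x) (hy : IsHomog gr c y) :
    IsHomog gr c (x + y) := by
  intro j k h
  by_cases hxk : (x j).coeff k = 0
  · exact hy j k (by simpa [hxk] using h)
  · exact hx j k hxk

lemma IsHomog.of_Uu_smul {c : ℤ} {v : V n} (h : IsHomog gr c (Uu • v)) :
    IsHomog gr (c + 2) v := by
  intro j k hk
  have := h j (k + 1) (by simpa [Uu, Polynomial.coeff_X_mul] using hk)
  push_cast at this
  omega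

lemma IsHomog.exists_coeff_ne_zero {c : ℤ} {x : V n} (h : IsHomog gr c x) {j : Fin n}
    (hj : x j ≠ 0) : ∃ k : ℕ, (x j).coeff k ≠ 0 ∧ gr j - 2 * k = c := by
  obtain ⟨k, hk⟩ : ∃ k, (x j).coeff k ≠ 0 := by
    by_contra! hk
    exact hj (Polynomial.ext hk)
  exact ⟨k, hk, h j k hk⟩

lemma isHomog_e (i : Fin n) : IsHomog gr (gr i) (e i) := by
  intro j k h
  by_cases hji : j = i
  · subst hji
    have : k = 0 := by by_contra hk; simp [e, Polynomial.coeff_one, hk] at h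
    simp [this]
  · simp [e, hji] at h

lemma IsHomog.map {gr₁ : Fin m → ℤ} {dg c : ℤ} {f : V m →ₗ[R] V n}
    (hf : GradedMap gr₁ gr dg f) {x : V m} (hx : IsHomog gr₁ c x) :
    IsHomog gr (c + dg) (f x) := by
  intro j k h
  have hsum : f x = ∑ i, x i • f (e i) := by
    conv_lhs => rw [show x = ∑ i, x i • e i by ext; simp [e]]
    simp [map_sum]
  rw [hsum, Finset.sum_apply, Polynomial.finsetSum_coeff] at h
  obtain ⟨i, -, hi⟩ := Finset.exists_ne_zero_of_sum_ne_zero h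
  rw [Pi.smul_apply, smul_eq_mul, Polynomial.coeff_mul] at hi
  obtain ⟨⟨a, b⟩, hab, habne⟩ := Finset.exists_ne_zero_of_sum_ne_zero hi
  have ha := hx i a (left_ne_zero_of_mul habne)
  have hb := hf i j b (right_ne_zero_of_mul habne)
  have : (a : ℤ) + b = k := by exact_mod_cast Finset.HasAntidiagonal.mem_antidiagonal.1 hab
  omega

lemma gradedMap_id : GradedMap gr gr 0 LinearMap.id := fun i => by
  simpa using isHomog_e i

lemma GradedMap.add {gr₁ : Fin m → ℤ} {dg : ℤ} {f g : V m →ₗ[R] V n}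
    (hf : GradedMap gr₁ gr dg f) (hg : GradedMap gr₁ gr dg g) : GradedMap gr₁ gr dg (f + g) :=
  fun i => (hf i).add (hg i)

lemma GradedMap.comp {p : ℕ} {gr₁ : Fin m → ℤ} {gr₃ : Fin p → ℤ} {d₁ d₂ : ℤ}
    {f : V m →ₗ[R] V n} {g : V n →ₗ[R] V p}
    (hf : GradedMap gr₁ gr d₁ f) (hg : GradedMap gr gr₃ d₂ g) :
    GradedMap gr₁ gr₃ (d₁ + d₂) (g ∘ₗ f) := fun i => by
  simpa [add_assoc] using (hf i).map hg

end Grading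

section Morphisms

variable {C₁ C₂ C₃ : PreAI}

lemma comp_omega_add_omega_comp (f : V C₁.n →ₗ[R] V C₂.n) :
    f ∘ₗ omega C₁ + omega C₂ ∘ₗ f = f ∘ₗ C₁.ι + C₂.ι ∘ₗ f := by
  refine LinearMap.ext fun x => ?_
  simp only [omega, LinearMap.add_apply, LinearMap.comp_apply, LinearMap.id_apply, map_add]
  rw [add_add_add_comm, add_self_eq_zero, zero_add]

lemma isAIMorphism.exists_homotopy_omega {f : V C₁.n →ₗ[R] V C₂.n}
    (hf : isAIMorphism C₁ C₂ f) :
    ∃ H : V C₁.n →ₗ[R] V C₂.n, GradedMap C₁.gr C₂.gr 1 H ∧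
      ∀ x, modU (f (omega C₁ x) + omega C₂ (f x) + H (C₁.d x) + C₂.d (H x)) := by
  obtain ⟨-, -, H, hH, hmod⟩ := hf
  refine ⟨H, hH, fun x => ?_⟩
  have key := LinearMap.congr_fun (comp_omega_add_omega_comp f) x
  simp only [LinearMap.add_apply, LinearMap.comp_apply] at key hmod
  rw [key]
  exact hmod x

lemma isAIMorphism.comp {f : V C₁.n →ₗ[R] V C₂.n} {g : V C₂.n →ₗ[R] V C₃.n}
    (hf : isAIMorphism C₁ C₂ f) (hg : isAIMorphism C₂ C₃ g) : isAIMorphism C₁ C₃ (g ∘ₗ f) := by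
  obtain ⟨hfgr, hfd, H, hHgr, hH⟩ := hf
  obtain ⟨hggr, hgd, K, hKgr, hK⟩ := hg
  refine ⟨by simpa using hfgr.comp hggr, ?_, g ∘ₗ H + K ∘ₗ f,
    (by simpa using hHgr.comp hggr : GradedMap _ _ 1 _).add
      (by simpa using hfgr.comp hKgr : GradedMap _ _ 1 _), fun x => ?_⟩
  · rw [LinearMap.comp_assoc, hfd, ← LinearMap.comp_assoc, hgd, LinearMap.comp_assoc]
  have hfx : f (C₁.d x) = C₂.d (f x) := LinearMap.congr_fun hfd x
  have hgy : ∀ y, g (C₂.d y) = C₃.d (g y) := LinearMap.congr_fun hgd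
  -- the two homotopies add up to the composite one, except for `g (ι (f x))` counted twice
  have key : g ((f ∘ₗ C₁.ι + C₂.ι ∘ₗ f + H ∘ₗ C₁.d + C₂.d ∘ₗ H) x)
        + (g ∘ₗ C₂.ι + C₃.ι ∘ₗ g + K ∘ₗ C₂.d + C₃.d ∘ₗ K) (f x)
      = ((g ∘ₗ f) ∘ₗ C₁.ι + C₃.ι ∘ₗ (g ∘ₗ f) + (g ∘ₗ H + K ∘ₗ f) ∘ₗ C₁.d
          + C₃.d ∘ₗ (g ∘ₗ H + K ∘ₗ f)) x + (g (C₂.ι (f x)) + g (C₂.ι (f x))) := by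
    simp only [LinearMap.add_apply, LinearMap.comp_apply, map_add, hfx, hgy]
    abel
  rw [add_self_eq_zero, add_zero] at key
  exact key ▸ modU_add (modU_map g (hH x)) (hK (f x))

lemma isLocalMap.comp {f : V C₁.n →ₗ[R] V C₂.n} {g : V C₂.n →ₗ[R] V C₃.n}
    (hf : isLocalMap C₁ C₂ f) (hg : isLocalMap C₂ C₃ g) : isLocalMap C₁ C₃ (g ∘ₗ f) :=
  ⟨hf.1.comp hg.1, fun x hx => hg.2 _ (hf.2 x hx)⟩

end Morphisms

section Genuine

variable {X : PreAI}

lemma IsIotaCplx.d_d (hX : IsIotaCplx X) (w : V X.n) : X.d (X.d w) = 0 := by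
  simpa using LinearMap.congr_fun hX.1.2 w

lemma IsIotaCplx.omega_d (hX : IsIotaCplx X) (w : V X.n) :
    omega X (X.d w) = X.d (omega X w) := by
  have := LinearMap.congr_fun hX.2.2.1 w
  simp only [LinearMap.comp_apply] at this
  simp [omega, this]

lemma gradedMap_omega (h : GradedMap X.gr X.gr 0 X.ι) : GradedMap X.gr X.gr 0 (omega X) :=
  gradedMap_id.add h

end Genuine

section Matrix

variable {n : ℕ} (c : ℕ → ℕ → R)

lemma ofMatrix_apply (w : V n) (k : Fin n) : ofMatrix c w k = ∑ i, w i * c i k := rfl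

lemma ofMatrix_e (i : Fin n) : ofMatrix c (e i) = fun k : Fin n => c i k := by
  funext k
  simp [ofMatrix, e]

lemma ofMatrix_apply_of_col {p q : Fin n} (h : ∀ i : Fin n, i ≠ p → c i q = 0) (w : V n) :
    ofMatrix c w q = w p * c p q := by
  rw [ofMatrix_apply]
  exact Finset.sum_eq_single p (fun i _ hi => by simp [h i hi]) (by simp)

lemma ofMatrix_apply_eq_zero {q : Fin n} (h : ∀ i : Fin n, c i q = 0) (w : V n) :
    ofMatrix c w q = 0 := by
  rw [ofMatrix_apply]
  exact Finset.sum_eq_zero fun i _ => by simp [h i]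

/-- Rows and columns `p`, `q` of `c` vanish except for `c p q = r`: the generators `T_p`, `T_q`
span a direct summand on which the map is `T_p ↦ r T_q`. -/
def IsArrow (p q : ℕ) (r : R) : Prop :=
  ∀ i k, (i = p ∨ i = q ∨ k = p ∨ k = q) → c i k = if i = p ∧ k = q then r else 0

variable {c} {p q : Fin n} {r : R}

lemma IsArrow.ofMatrix_e_src (h : IsArrow c p q r) : ofMatrix c (e p) = r • e q := by
  funext k
  simp [ofMatrix_e, h p k (Or.inl rfl), e, Fin.val_inj]

lemma IsArrow.ofMatrix_e_tgt (h : IsArrow c p q r) (hpq : p ≠ q) : ofMatrix c (e q) = 0 := by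
  funext k
  simp [ofMatrix_e, h q k (Or.inr (Or.inl rfl)), Fin.val_inj, hpq.symm]

lemma IsArrow.ofMatrix_apply_src (h : IsArrow c p q r) (hpq : p ≠ q) (w : V n) :
    ofMatrix c w p = 0 :=
  ofMatrix_apply_eq_zero c (fun i => by simp [h i p (by tauto), Fin.val_inj, hpq]) w

lemma IsArrow.ofMatrix_apply_tgt (h : IsArrow c p q r) (w : V n) : ofMatrix c w q = w p * r := by
  rw [ofMatrix_apply_of_col c (p := p) (fun i hi => by simp [h i q (by tauto), Fin.val_inj, hi]) w]
  simp [h p q (Or.inl rfl)]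

end Matrix

section StdCplx

variable (M : List ℤ)

lemma isArrow_dCoef_of_neg {s : ℕ} (hs : s % 2 = 1) (hb : seqAt M s < 0) :
    IsArrow (dCoef M) s (s + 1) (Uu ^ (seqAt M s).natAbs) := by
  intro i k h
  unfold dCoef
  split_ifs
  · obtain rfl : i = s := by omega
    rfl
  · omega
  · omega
  · obtain rfl : i = s + 1 := by omega
    simp only [Nat.add_sub_cancel] at *
    omega
  · obtain rfl : i = s := by omega
    omega
  · rfl

lemma isArrow_dCoef_of_pos {s : ℕ} (hs : s % 2 = 1) (hb : 0 < seqAt M s) :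
    IsArrow (dCoef M) (s + 1) s (Uu ^ (seqAt M s).natAbs) := by
  intro i k h
  unfold dCoef
  split_ifs
  · obtain rfl : i = s := by omega
    omega
  · obtain rfl : i = s := by omega
    omega
  · obtain rfl : i = s + 1 := by omega
    simp only [Nat.add_sub_cancel]
  · obtain rfl : i = s + 1 := by omega
    omega
  · obtain rfl : i = s + 1 := by omega
    simp only [Nat.add_sub_cancel] at *
    omega
  · rfl

lemma isArrow_wCoef_of_neg {s : ℕ} (hs : s % 2 = 0) (ha : seqAt M s = -1) :
    IsArrow (wCoef M) s (s + 1) 1 := by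
  intro i k h
  unfold wCoef
  split_ifs
  · rfl
  · omega
  · omega
  · obtain rfl : i = s + 1 := by omega
    simp only [Nat.add_sub_cancel] at *
    omega
  · obtain rfl : i = s := by omega
    omega
  · rfl

lemma isArrow_wCoef_of_pos {s : ℕ} (hs : s % 2 = 0) (ha : seqAt M s = 1) :
    IsArrow (wCoef M) (s + 1) s 1 := by
  intro i k h
  unfold wCoef
  split_ifs
  · obtain rfl : i = s := by omega
    omega
  · obtain rfl : i = s := by omega
    omega
  · rfl
  · obtain rfl : i = s + 1 := by omega
    omega
  · obtain rfl : i = s + 1 := by omega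
    simp only [Nat.add_sub_cancel] at *
    omega
  · rfl

lemma dCoef_zero_left (k : ℕ) : dCoef M 0 k = 0 := by
  simp [dCoef]

lemma dCoef_zero_right (i : ℕ) : dCoef M i 0 = 0 := by
  rw [dCoef, if_neg (by omega), if_neg (by omega)]

lemma omega_symCplx : omega (symCplx M) = ofMatrix (wCoef M) := by
  refine LinearMap.ext fun w => funext fun j => ?_
  change w j + ∑ i, w i * iCoef M i j = ∑ i, w i * wCoef M i j
  simp [iCoef, mul_add, Finset.sum_add_distrib, Fin.val_inj, ← add_assoc, add_self_eq_zero]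

instance : NeZero (symCplx M).n := ⟨M.length.succ_ne_zero⟩

end StdCplx

section Torsion

variable {M : List ℤ}

lemma symCplx_d : (symCplx M).d = ofMatrix (n := (symCplx M).n) (dCoef M) := rfl

lemma e_zero_nontorsion : NontorsionClass (symCplx M).toPreCplx (e 0) := by
  rw [nontorsionClass_iff]
  refine ⟨funext fun k => ?_, ?_⟩
  · simp [symCplx_d, ofMatrix_e, dCoef_zero_left]
  rintro ⟨k, y, hy⟩
  have hy0 := congrFun hy 0
  rw [symCplx_d, ofMatrix_apply_eq_zero _ (fun i => dCoef_zero_right M i) y] at hy0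
  simp only [e, Pi.smul_apply, if_true, smul_eq_mul, mul_one] at hy0
  exact Uu_pow_ne_zero k hy0.symm

lemma exists_isArrow (hM : StdParams M) {j : Fin (symCplx M).n} (hj : j ≠ 0) :
    ∃ (p q : Fin (symCplx M).n) (b : ℕ),
      IsArrow (dCoef M) p q (Uu ^ b) ∧ (j = p ∨ j = q) := by
  have hj0 : 0 < (j : ℕ) := Nat.pos_of_ne_zero (Fin.val_ne_iff.2 hj)
  have hjL : (j : ℕ) < M.length + 1 := j.isLt
  have hL := hM.1
  obtain ⟨s, hs, hsL, hjs⟩ : ∃ s, s % 2 = 1 ∧ s < M.length ∧ ((j : ℕ) = s ∨ (j : ℕ) = s + 1) :=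
    ⟨2 * (((j : ℕ) - 1) / 2) + 1, by omega, by omega, by omega⟩
  have hs1 : s + 1 < (symCplx M).n := by change s + 1 < M.length + 1; omega
  have hb : seqAt M s ≠ 0 := by simpa [hs] using hM.2 s hsL
  rcases hb.lt_or_gt with hb | hb
  · refine ⟨⟨s, by omega⟩, ⟨s + 1, hs1⟩, _, isArrow_dCoef_of_neg M hs hb, ?_⟩
    simpa [Fin.ext_iff] using hjs
  · refine ⟨⟨s + 1, hs1⟩, ⟨s, by omega⟩, _, isArrow_dCoef_of_pos M hs hb, ?_⟩
    simpa [Fin.ext_iff, or_comm] using hjs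

lemma smul_e_mem_uTorsion {z : V (symCplx M).n} (hz : IsCycle (symCplx M).toPreCplx z)
    {p q : Fin (symCplx M).n} {b : ℕ} (harr : IsArrow (dCoef M) p q (Uu ^ b))
    {j : Fin (symCplx M).n} (hj : j = p ∨ j = q) :
    z j • e j ∈ uTorsion (symCplx M).toPreCplx := by
  rcases hj with rfl | rfl
  · have : z j * Uu ^ b = 0 := by
      rw [← harr.ofMatrix_apply_tgt]
      exact congrFun hz q
    rw [(mul_eq_zero.1 this).resolve_right (Uu_pow_ne_zero b), zero_smul]
    exact zero_mem _
  · exact Submodule.smul_mem _ _ ⟨b, e p, harr.ofMatrix_e_src⟩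

lemma mem_uTorsion_of_apply_zero (hM : StdParams M) {z : V (symCplx M).n}
    (hz : IsCycle (symCplx M).toPreCplx z) (h0 : z 0 = 0) :
    z ∈ uTorsion (symCplx M).toPreCplx := by
  rw [show z = ∑ j, z j • e j by funext k; simp [e]]
  refine Submodule.sum_mem _ fun j _ => ?_
  rcases eq_or_ne j 0 with rfl | hj
  · simp only [h0, zero_smul]
    exact zero_mem _
  obtain ⟨p, q, b, harr, hjpq⟩ := exists_isArrow hM hj
  exact smul_e_mem_uTorsion hz harr hjpq

lemma exists_coeff_ne_zero_of_nontorsion (hM : StdParams M) {z : V (symCplx M).n}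
    (hz : NontorsionClass (symCplx M).toPreCplx z) {c : ℤ} (hc : IsHomog (symCplx M).gr c z) :
    ∃ k : ℕ, (z 0).coeff k ≠ 0 ∧ c = -2 * k := by
  have h0 : z 0 ≠ 0 := fun h0 =>
    (nontorsionClass_iff.1 hz).2 (mem_uTorsion_of_apply_zero hM hz.1 h0)
  obtain ⟨k, hk, hkc⟩ := hc.exists_coeff_ne_zero h0
  refine ⟨k, hk, ?_⟩
  simp [symCplx, stdGr] at hkc
  omega

end Torsion

section NonRealizable

variable {M : List ℤ} {X : PreAI}

lemma two_lt_n_of_seqAt_one_ne_zero (h : seqAt M 1 ≠ 0) : 2 < (symCplx M).n := by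
  by_contra hn
  exact h (List.getD_eq_default _ _ (by change ¬ 2 < M.length + 1 at hn; omega))

lemma not_isLocalMap_symCplx_of_neg (hM : StdParams M) (h0 : seqAt M 0 = -1)
    (h1 : seqAt M 1 < 0) (hX : IsIotaCplx X) (f : V X.n →ₗ[R] V (symCplx M).n) :
    ¬ isLocalMap X (symCplx M) f := by
  intro hf
  have h2 := two_lt_n_of_seqAt_one_ne_zero h1.ne
  set T₁ : Fin (symCplx M).n := ⟨1, by omega⟩
  set T₂ : Fin (symCplx M).n := ⟨2, h2⟩
  have hd : IsArrow (dCoef M) T₁ T₂ (Uu ^ (seqAt M 1).natAbs) := isArrow_dCoef_of_neg M rfl h1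
  have hω : IsArrow (wCoef M) (0 : Fin (symCplx M).n) T₁ 1 := by
    simpa using isArrow_wCoef_of_neg M rfl h0
  obtain ⟨x, hxc, hxh, hxnt, -⟩ := hX.2.2.2.2
  have hxd : X.d x = 0 := hxc
  obtain ⟨H, -, hH⟩ := hf.1.exists_homotopy_omega
  have hfd : ∀ w, f (X.d w) = (symCplx M).d (f w) := LinearMap.congr_fun hf.1.2.1
  -- `ω x` is a cycle as `ι` is a chain map, and `∂T₁ = U^i T₂` forbids a `T₁`-component
  have hωx : f (omega X x) T₁ = 0 := by
    have : (symCplx M).d (f (omega X x)) T₂ = 0 := by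
      rw [← hfd, ← hX.omega_d, hxd, map_zero, map_zero]
      rfl
    rw [symCplx_d, hd.ofMatrix_apply_tgt] at this
    exact (mul_eq_zero.1 this).resolve_right (Uu_pow_ne_zero _)
  have hmod : (f x 0).coeff 0 = 0 := by
    have := hH x T₁
    rw [hxd, map_zero, add_zero] at this
    simpa [hωx, omega_symCplx, hω.ofMatrix_apply_tgt, symCplx_d,
      hd.ofMatrix_apply_src (Fin.ne_of_val_ne (by decide : (1 : ℕ) ≠ 2))] using this
  obtain ⟨k, hk, hk0⟩ := exists_coeff_ne_zero_of_nontorsion hM (hf.2 x ⟨hxd, hxnt⟩)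
    (by simpa using hxh.map hf.1.1)
  obtain rfl : k = 0 := by omega
  exact hk hmod

lemma IsIotaCplx.nontorsionClass_of_Uu_smul_eq (hX : IsIotaCplx X) {x₀ y t w v : V X.n}
    {a : ℕ} (hx₀ : NontorsionClass X.toPreCplx x₀) (ht : X.d t = Uu ^ a • y)
    (hv : Uu • v = omega X y + x₀ + X.d w) : NontorsionClass X.toPreCplx v := by
  have hx₀d : X.d x₀ = 0 := hx₀.1
  have hyd : X.d y = 0 := by
    have : Uu ^ a • X.d y = 0 := by rw [← map_smul, ← ht, hX.d_d]
    exact (smul_eq_zero.1 this).resolve_left (Uu_pow_ne_zero a)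
  have hvd : X.d v = 0 := by
    have : Uu • X.d v = 0 := by
      rw [← map_smul, hv, map_add, map_add, hX.d_d, ← hX.omega_d, hyd, hx₀d]
      simp
    exact (smul_eq_zero.1 this).resolve_left (by simpa using Uu_pow_ne_zero 1)
  have hbdry : X.d (omega X t + Uu ^ a • w) = Uu ^ a • x₀ + Uu ^ (a + 1) • v := by
    have hωy : omega X y + X.d w = x₀ + Uu • v := by
      refine eq_of_add_eq_zero ?_
      rw [hv, show ∀ p q r : V X.n, p + r + (q + (p + q + r)) = p + p + (q + q) + (r + r) by
        intros; abel]
      simp only [add_self_eq_zero]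
    rw [map_add, ← hX.omega_d, ht, map_smul, map_smul, ← smul_add, hωy, smul_add, pow_succ,
      mul_smul]
  refine nontorsionClass_iff.2 ⟨hvd, fun hvt => (nontorsionClass_iff.1 hx₀).2 ?_⟩
  refine mem_uTorsion_of_Upow_smul_mem (k := a) ?_
  have := sub_mem (hbdry ▸ d_mem_uTorsion _) (Submodule.smul_mem _ (Uu ^ (a + 1)) hvt)
  simpa using this

lemma exists_nontorsionClass_isHomog_two_of_pos (h0 : seqAt M 0 = 1) (h1 : 0 < seqAt M 1)
    (hX : IsIotaCplx X) {g : V (symCplx M).n →ₗ[R] V X.n} (hg : isLocalMap (symCplx M) X g) :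
    ∃ v, NontorsionClass X.toPreCplx v ∧ IsHomog X.gr 2 v := by
  have h2 := two_lt_n_of_seqAt_one_ne_zero h1.ne'
  set T₁ : Fin (symCplx M).n := ⟨1, by omega⟩
  set T₂ : Fin (symCplx M).n := ⟨2, h2⟩
  have hd : IsArrow (dCoef M) T₂ T₁ (Uu ^ (seqAt M 1).natAbs) := isArrow_dCoef_of_pos M rfl h1
  have hω : IsArrow (wCoef M) T₁ (0 : Fin (symCplx M).n) 1 := by
    simpa using isArrow_wCoef_of_pos M rfl h0
  have hdT₁ : (symCplx M).d (e T₁) = 0 :=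
    hd.ofMatrix_e_tgt (Fin.ne_of_val_ne (by decide : (2 : ℕ) ≠ 1))
  have hωT₁ : omega (symCplx M) (e T₁) = e 0 := by
    rw [omega_symCplx, hω.ofMatrix_e_src, one_smul]
  obtain ⟨K, hKgr, hK⟩ := hg.1.exists_homotopy_omega
  obtain ⟨⟨hggr, hgd, -⟩, hgloc⟩ := hg
  have hgd' : ∀ w, g ((symCplx M).d w) = X.d (g w) := LinearMap.congr_fun hgd
  set u := omega X (g (e T₁)) + g (e 0) + X.d (K (e T₁))
  obtain ⟨v, hv⟩ : ∃ v, u = Uu • v := by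
    have := hK (e T₁)
    rw [hωT₁, hdT₁, map_zero, add_zero, add_comm (g (e 0))] at this
    exact modU_iff_exists_eq_smul.1 this
  have hgr₀ : (symCplx M).gr 0 = 0 := by simp [symCplx, stdGr]
  have hgr₁ : (symCplx M).gr T₁ = 0 := by simp [T₁, symCplx, stdGr]
  have hu : IsHomog X.gr 0 u := by
    have hωg : IsHomog X.gr 0 (omega X (g (e T₁))) := by
      simpa [hgr₁] using ((isHomog_e T₁).map hggr).map (gradedMap_omega hX.2.1)
    have hg₀ : IsHomog X.gr 0 (g (e 0)) := by simpa [hgr₀] using (isHomog_e 0).map hggr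
    have hdK : IsHomog X.gr 0 (X.d (K (e T₁))) := by
      simpa [hgr₁] using ((isHomog_e T₁).map hKgr).map hX.1.1
    exact (hωg.add hg₀).add hdK
  have ht : X.d (g (e T₂)) = Uu ^ (seqAt M 1).natAbs • g (e T₁) := by
    rw [← hgd', symCplx_d, hd.ofMatrix_e_src, map_smul]
  exact ⟨v, hX.nontorsionClass_of_Uu_smul_eq (hgloc _ e_zero_nontorsion) ht hv.symm,
    by simpa using (hv ▸ hu).of_Uu_smul⟩

lemma not_isLocalMap_symCplx_of_pos (hM : StdParams M) (h0 : seqAt M 0 = 1)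
    (h1 : 0 < seqAt M 1) (hX : IsIotaCplx X) {g : V (symCplx M).n →ₗ[R] V X.n}
    (hg : isLocalMap (symCplx M) X g) (f : V X.n →ₗ[R] V (symCplx M).n) :
    ¬ isLocalMap X (symCplx M) f := by
  intro hf
  obtain ⟨v, hv, hvh⟩ := exists_nontorsionClass_isHomog_two_of_pos h0 h1 hX hg
  obtain ⟨k, -, hk⟩ := exists_coeff_ne_zero_of_nontorsion hM (hf.2 v hv)
    (by simpa using hvh.map hf.1.1)
  omega

end NonRealizable

/-- non-realizability: if the standard complex of `A` has initial
parameters `(−1, −i)` with `i > 0` (or dually `(+1, i)`), then `A` is not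
locally equivalent to any genuine ι-complex; in particular the forgetful map
from ι-complexes to almost ι-complexes modulo local equivalence is not
surjective. -/
theorem non_realizable (A : PreAI) (hA : IsAICplx A) (M : List ℤ) (hM : StdParams M)
    (hfirst : (seqAt M 0 = -1 ∧ seqAt M 1 < 0) ∨ (seqAt M 0 = 1 ∧ 0 < seqAt M 1))
    (heq : LocallyEquiv A (symCplx M)) :
    (¬ ∃ X : PreAI, IsIotaCplx X ∧ LocallyEquiv X A) ∧
    ∃ A' : PreAI, IsAICplx A' ∧ ¬ ∃ X : PreAI, IsIotaCplx X ∧ LocallyEquiv X A' := by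
  have not_realizable : ¬ ∃ X : PreAI, IsIotaCplx X ∧ LocallyEquiv X A := by
    rintro ⟨X, hX, ⟨f, hf⟩, g, hg⟩
    obtain ⟨⟨fA, hfA⟩, gA, hgA⟩ := heq
    rcases hfirst with ⟨h0, h1⟩ | ⟨h0, h1⟩
    · exact not_isLocalMap_symCplx_of_neg hM h0 h1 hX _ (hf.comp hfA)
    · exact not_isLocalMap_symCplx_of_pos hM h0 h1 hX (hgA.comp hg) _ (hf.comp hfA)
  exact ⟨not_realizable, A, hA, not_realizable⟩

end AI
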